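/- arXiv:1111.4282 — 6 statements merged into one kernel-verified Lean document; each statement's English description precedes it below -/
import Mathlib

section
/- Let (G, X) be a second-countable transformation group, let z ∈ X, and let (x_n) be a sequence in X such that S_{x_n} → S_z in the Fell topology on closed subgroups of G. Let W be a compact subset of G. Then the values χ_{W S_{x_n}}(r) of the characteristic functions converge to χ_{W S_z}(r) for every r ∈ (G \ W S_z) ∪ (Int W) S_z. Moreover, if μ(W S_z \ (Int W) S_z) = 0 for a left Haar measure μ on G, then χ_{W S_{x_n}} → χ_{W S_z} μ-almost everywhere on G. -/
open MeasureTheory Filter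
open scoped Pointwise Topology

/-- Convergence `S n → T` of closed subgroups in the Fell topology, characterized
sequentially: (i) every element of `T` is a limit of elements of the `S n`;
(ii) every limit of elements along a subsequence lies in `T`. -/
def FellConvergent {G : Type*} [Group G] [TopologicalSpace G]
    (S : ℕ → Subgroup G) (T : Subgroup G) : Prop :=
  (∀ h ∈ T, ∃ u : ℕ → G, (∀ n, u n ∈ S n) ∧ Tendsto u atTop (𝓝 h)) ∧
  (∀ φ : ℕ → ℕ, StrictMono φ → ∀ u : ℕ → G, (∀ k, u k ∈ S (φ k)) →
    ∀ h : G, Tendsto u atTop (𝓝 h) → h ∈ T)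

/-!
If `r ∉ W T`, yet `r = w_k t_k` with `w_k ∈ W`, `t_k ∈ S_{n_k}` along a subsequence, then by
compactness of `W` some further subsequence has `w_k → a ∈ W`, so `t_k = w_k⁻¹ r → a⁻¹ r`, which lies
in `T` by the second Fell condition, giving `r = a (a⁻¹ r) ∈ W T`. If instead `r = w t` with
`w ∈ Int W` and `t ∈ T`, approximate `t` by `u_n ∈ S_n` (first Fell condition): `r u_n⁻¹ → w` lies
in `W` eventually, so `r ∈ W S_n` eventually. Off a null set every `r` is in one of these two cases.
-/

namespace FellConvergent

variable {G : Type*} [Group G] [TopologicalSpace G] {S : ℕ → Subgroup G} {T : Subgroup G}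
  {W : Set G} {r : G}

theorem eventually_notMem_mul [IsTopologicalGroup G] [FirstCountableTopology G]
    (hF : FellConvergent S T) (hW : IsCompact W) (hr : r ∉ W * (T : Set G)) :
    ∀ᶠ n in atTop, r ∉ W * (S n : Set G) := by
  by_contra hfreq
  rw [not_eventually] at hfreq
  simp only [not_not] at hfreq
  obtain ⟨φ, hφ, hmem⟩ := extraction_of_frequently_atTop hfreq
  choose w hw t ht hwt using fun k => Set.mem_mul.mp (hmem k)
  obtain ⟨a, haW, ψ, hψ, hwa⟩ := hW.tendsto_subseq hw
  have ht_eq : ∀ k, t (ψ k) = (w (ψ k))⁻¹ * r := fun k => by rw [← hwt (ψ k)]; group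
  have ht_lim : Tendsto (fun k => t (ψ k)) atTop (𝓝 (a⁻¹ * r)) := by
    simp only [ht_eq]
    exact hwa.inv.mul tendsto_const_nhds
  have haT : a⁻¹ * r ∈ T := hF.2 (φ ∘ ψ) (hφ.comp hψ) _ (fun k => ht (ψ k)) _ ht_lim
  exact hr (by simpa using Set.mul_mem_mul haW haT)

theorem eventually_mem_mul [IsTopologicalGroup G] (hF : FellConvergent S T)
    (hr : r ∈ interior W * (T : Set G)) : ∀ᶠ n in atTop, r ∈ W * (S n : Set G) := by
  obtain ⟨w, hw, t, ht, rfl⟩ := hr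
  obtain ⟨u, hu, hut⟩ := hF.1 t ht
  have hlim : Tendsto (fun n => w * t * (u n)⁻¹) atTop (𝓝 w) := by
    simpa using (tendsto_const_nhds (x := w * t)).mul hut.inv
  filter_upwards [hlim.eventually (isOpen_interior.mem_nhds hw)] with n hn
  simpa using Set.mul_mem_mul (interior_subset hn) (hu n)

theorem tendsto_indicator_mul_apply [IsTopologicalGroup G] [FirstCountableTopology G]
    {β : Type*} [Zero β] [TopologicalSpace β] [T1Space β] (b : β) [NeZero b]
    (hF : FellConvergent S T) (hW : IsCompact W)
    (hr : r ∈ (W * (T : Set G))ᶜ ∪ interior W * (T : Set G)) :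
    Tendsto (fun n => (W * (S n : Set G)).indicator (fun _ => b) r) atTop
      (𝓝 ((W * (T : Set G)).indicator (fun _ => b) r)) := by
  rw [tendsto_indicator_const_apply_iff_eventually]
  rcases hr with hr | hr
  · filter_upwards [hF.eventually_notMem_mul hW hr] with n hn
    exact iff_of_false hn hr
  · filter_upwards [hF.eventually_mem_mul hr] with n hn
    exact iff_of_true hn (Set.mul_subset_mul_right interior_subset hr)

end FellConvergent

theorem stmt1_general {G X : Type*} [Group G] [TopologicalSpace G] [IsTopologicalGroup G]
    [SecondCountableTopology G]
    [MulAction G X]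
    [MeasurableSpace G]
    (μ : Measure G)
    (z : X) (x : ℕ → X)
    (hF : FellConvergent (fun n => MulAction.stabilizer G (x n)) (MulAction.stabilizer G z))
    (W : Set G) (hW : IsCompact W) :
    (∀ r ∈ (W * (MulAction.stabilizer G z : Set G))ᶜ ∪
        (interior W * (MulAction.stabilizer G z : Set G)),
      Tendsto
        (fun n => (W * (MulAction.stabilizer G (x n) : Set G)).indicator
          (fun _ => (1 : ℝ)) r)
        atTop
        (𝓝 ((W * (MulAction.stabilizer G z : Set G)).indicator (fun _ => (1 : ℝ)) r))) ∧
    (μ ((W * (MulAction.stabilizer G z : Set G)) \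
          (interior W * (MulAction.stabilizer G z : Set G))) = 0 →
      ∀ᵐ r ∂μ, Tendsto
        (fun n => (W * (MulAction.stabilizer G (x n) : Set G)).indicator
          (fun _ => (1 : ℝ)) r)
        atTop
        (𝓝 ((W * (MulAction.stabilizer G z : Set G)).indicator (fun _ => (1 : ℝ)) r))) := by
  have hconv := fun r (hr : r ∈ _) => hF.tendsto_indicator_mul_apply (1 : ℝ) hW hr
  refine ⟨hconv, fun hnull => ?_⟩
  filter_upwards [measure_eq_zero_iff_ae_notMem.mp hnull] with r hr
  rw [← Set.mem_compl_iff, Set.compl_sdiff, Set.union_comm] at hr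
  exact hconv r hr

/-- If `S_{x_n} → S_z` in the Fell topology and `W ⊆ G` is compact, then
`χ_{W S_{x_n}}(r) → χ_{W S_z}(r)` for every `r ∈ (G \ W S_z) ∪ (Int W) S_z`; and if
`μ(W S_z \ (Int W) S_z) = 0` for a left Haar measure `μ`, then `χ_{W S_{x_n}} → χ_{W S_z}`
`μ`-almost everywhere. -/
theorem stmt1 {G X : Type*} [Group G] [TopologicalSpace G] [IsTopologicalGroup G]
    [LocallyCompactSpace G] [T2Space G] [SecondCountableTopology G]
    [TopologicalSpace X] [T2Space X] [LocallyCompactSpace X] [SecondCountableTopology X]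
    [MulAction G X] [ContinuousSMul G X]
    [MeasurableSpace G] [BorelSpace G]
    (μ : Measure G) [μ.IsHaarMeasure]
    (z : X) (x : ℕ → X)
    (hF : FellConvergent (fun n => MulAction.stabilizer G (x n)) (MulAction.stabilizer G z))
    (W : Set G) (hW : IsCompact W) :
    (∀ r ∈ (W * (MulAction.stabilizer G z : Set G))ᶜ ∪
        (interior W * (MulAction.stabilizer G z : Set G)),
      Tendsto
        (fun n => (W * (MulAction.stabilizer G (x n) : Set G)).indicator
          (fun _ => (1 : ℝ)) r)
        atTop
        (𝓝 ((W * (MulAction.stabilizer G z : Set G)).indicator (fun _ => (1 : ℝ)) r))) ∧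
    (μ ((W * (MulAction.stabilizer G z : Set G)) \
          (interior W * (MulAction.stabilizer G z : Set G))) = 0 →
      ∀ᵐ r ∂μ, Tendsto
        (fun n => (W * (MulAction.stabilizer G (x n) : Set G)).indicator
          (fun _ => (1 : ℝ)) r)
        atTop
        (𝓝 ((W * (MulAction.stabilizer G z : Set G)).indicator (fun _ => (1 : ℝ)) r))) :=
  stmt1_general μ z x hF W hW
end

section
/- Let (G, X) be a second-countable transformation group, let z ∈ X, and let (x_n) be a sequence in X such that S_{x_n} → S_z in the Fell topology on closed subgroups of G. Let W be a compact subset of G. Then the sets W S_{x_n} and W S_z are closed in G, and W S_{x_n} → W S_z in the Kuratowski sense: (a) every s ∈ W S_z is the limit of a sequence (s_n) with s_n ∈ W S_{x_n} for all n; and (b) whenever s_n ∈ W S_{x_n} for all n and s_n → s in G, then s ∈ W S_z. -/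
open Filter
open scoped Pointwise Topology

/-! Closedness of `W S` is compact-times-closed. For (b), write `s_n = w_n t_n`; by sequential
compactness of `W` a subsequence `w_{φ k}` converges to some `w ∈ W`, so `t_{φ k} = w_{φ k}⁻¹ s_{φ k}`
converges to `w⁻¹ s`, which lies in `S_z` by the subsequence clause of Fell convergence. -/

theorem MulAction.isClosed_stabilizer {G X : Type*} [Group G] [TopologicalSpace G]
    [TopologicalSpace X] [T2Space X] [MulAction G X] [ContinuousSMul G X] (x : X) :
    IsClosed (MulAction.stabilizer G x : Set G) :=
  isClosed_eq (continuous_id.smul continuous_const) continuous_const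

namespace FellConvergent

variable {G : Type*} [Group G] [TopologicalSpace G] {S : ℕ → Subgroup G} {T : Subgroup G}

theorem exists_tendsto_mem_mul [ContinuousMul G] (hF : FellConvergent S T) (W : Set G) {s : G}
    (hs : s ∈ W * (T : Set G)) :
    ∃ u : ℕ → G, (∀ n, u n ∈ W * (S n : Set G)) ∧ Tendsto u atTop (𝓝 s) := by
  obtain ⟨w, hw, t, ht, rfl⟩ := hs
  obtain ⟨v, hv, hvt⟩ := hF.1 t ht
  exact ⟨fun n => w * v n, fun n => Set.mul_mem_mul hw (hv n), tendsto_const_nhds.mul hvt⟩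

theorem mem_mul_of_tendsto [IsTopologicalGroup G] (hF : FellConvergent S T) {W : Set G}
    (hW : IsSeqCompact W) {u : ℕ → G} (hu : ∀ n, u n ∈ W * (S n : Set G)) {s : G}
    (hus : Tendsto u atTop (𝓝 s)) : s ∈ W * (T : Set G) := by
  choose w hwW t ht hwt using hu
  obtain ⟨a, haW, φ, hφ, hwa⟩ := hW hwW
  have ht_tendsto : Tendsto (fun k => (w (φ k))⁻¹ * u (φ k)) atTop (𝓝 (a⁻¹ * s)) :=
    hwa.inv.mul (hus.comp hφ.tendsto_atTop)
  have ht_mem (k : ℕ) : (w (φ k))⁻¹ * u (φ k) ∈ S (φ k) := by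
    rw [← hwt (φ k), inv_mul_cancel_left]
    exact ht (φ k)
  exact ⟨a, haW, a⁻¹ * s, hF.2 φ hφ _ ht_mem _ ht_tendsto, mul_inv_cancel_left a s⟩

end FellConvergent

theorem stmt2_general {G X : Type*} [Group G] [TopologicalSpace G] [IsTopologicalGroup G]
    [SecondCountableTopology G]
    [TopologicalSpace X] [T2Space X]
    [MulAction G X] [ContinuousSMul G X]
    (z : X) (x : ℕ → X)
    (hF : FellConvergent (fun n => MulAction.stabilizer G (x n)) (MulAction.stabilizer G z))
    (W : Set G) (hW : IsCompact W) :
    (∀ n, IsClosed (W * (MulAction.stabilizer G (x n) : Set G))) ∧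
    IsClosed (W * (MulAction.stabilizer G z : Set G)) ∧
    (∀ s ∈ W * (MulAction.stabilizer G z : Set G),
      ∃ u : ℕ → G, (∀ n, u n ∈ W * (MulAction.stabilizer G (x n) : Set G)) ∧
        Tendsto u atTop (𝓝 s)) ∧
    (∀ u : ℕ → G, (∀ n, u n ∈ W * (MulAction.stabilizer G (x n) : Set G)) →
      ∀ s : G, Tendsto u atTop (𝓝 s) → s ∈ W * (MulAction.stabilizer G z : Set G)) :=
  ⟨fun n => (MulAction.isClosed_stabilizer (x n)).mul_left_of_isCompact hW,
    (MulAction.isClosed_stabilizer z).mul_left_of_isCompact hW,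
    fun _ hs => hF.exists_tendsto_mem_mul W hs,
    fun _ hu _ hus => hF.mem_mul_of_tendsto hW.isSeqCompact hu hus⟩

/-- If `S_{x_n} → S_z` in the Fell topology and `W ⊆ G` is compact, then the
sets `W S_{x_n}` and `W S_z` are closed, and `W S_{x_n} → W S_z` in the Kuratowski sense:
(a) every point of `W S_z` is a limit of a sequence with `s_n ∈ W S_{x_n}`; (b) any limit
of a sequence with `s_n ∈ W S_{x_n}` lies in `W S_z`. -/
theorem stmt2 {G X : Type*} [Group G] [TopologicalSpace G] [IsTopologicalGroup G]
    [LocallyCompactSpace G] [T2Space G] [SecondCountableTopology G]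
    [TopologicalSpace X] [T2Space X] [LocallyCompactSpace X] [SecondCountableTopology X]
    [MulAction G X] [ContinuousSMul G X]
    (z : X) (x : ℕ → X)
    (hF : FellConvergent (fun n => MulAction.stabilizer G (x n)) (MulAction.stabilizer G z))
    (W : Set G) (hW : IsCompact W) :
    (∀ n, IsClosed (W * (MulAction.stabilizer G (x n) : Set G))) ∧
    IsClosed (W * (MulAction.stabilizer G z : Set G)) ∧
    (∀ s ∈ W * (MulAction.stabilizer G z : Set G),
      ∃ u : ℕ → G, (∀ n, u n ∈ W * (MulAction.stabilizer G (x n) : Set G)) ∧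
        Tendsto u atTop (𝓝 s)) ∧
    (∀ u : ℕ → G, (∀ n, u n ∈ W * (MulAction.stabilizer G (x n) : Set G)) →
      ∀ s : G, Tendsto u atTop (𝓝 s) → s ∈ W * (MulAction.stabilizer G z : Set G)) :=
  stmt2_general z x hF W hW
end

section
/- Let G be a locally compact abelian group with Haar measure μ, and let S be a closed subgroup of G such that S is either countable or compact. Then there exists a compact symmetric neighbourhood W of the identity in G (i.e. W = W^{-1}) such that μ(WS \ (Int W)S) = 0. -/
/-!
Take a continuous, compactly supported bump `g` with `g 1 = 1` and `g x⁻¹ = g x`, and let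
`W r = {x | r ≤ g x}`. For `r' < r` we have `W r ⊆ interior (W r')`, so the sets
`W r * S \ (interior (W r) * S)`, `r ∈ (1/2, 1)`, are pairwise disjoint. They all lie in
`W (1/2) * S`, which is σ-compact (a countable union of translates of a compact set, or compact),
so `μ` restricted to it is σ-finite. Uncountably many disjoint measurable sets cannot all have
positive measure under a σ-finite measure, so one of these `W r` works.
-/

open Function MeasureTheory Set
open scoped Pointwise

theorem IsSigmaCompact.sigmaFinite_restrict {X : Type*} [TopologicalSpace X] [MeasurableSpace X]
    {μ : Measure X} [IsFiniteMeasureOnCompacts μ] {s : Set X} (hs : IsSigmaCompact s)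
    (hsm : MeasurableSet s) : SigmaFinite (μ.restrict s) := by
  obtain ⟨K, hK, rfl⟩ := hs
  refine Measure.sigmaFinite_of_countable (S := insert (⋃ n, K n)ᶜ (range K))
    ((countable_range K).insert _) ?_ ?_
  · rintro t (rfl | ⟨n, rfl⟩)
    · simp only [Measure.restrict_apply hsm.compl, compl_inter_self, measure_empty,
        ENNReal.zero_lt_top]
    · exact (Measure.restrict_apply_le _ _).trans_lt (hK n).measure_lt_top
  · rw [sUnion_insert, sUnion_range, compl_union_self]

theorem IsCompact.isSigmaCompact_mul {M : Type*} [TopologicalSpace M] [Mul M] [ContinuousMul M]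
    {K S : Set M} (hK : IsCompact K) (hS : S.Countable ∨ IsCompact S) :
    IsSigmaCompact (K * S) := by
  rcases hS with hS | hS
  · rw [← iUnion_mul_right_image]
    exact isSigmaCompact_biUnion hS fun a _ ↦
      (hK.image (continuous_mul_const a)).isSigmaCompact
  · exact (hK.mul hS).isSigmaCompact

theorem MeasureTheory.Measure.exists_mem_measure_eq_zero_of_pairwiseDisjoint {α ι : Type*}
    [MeasurableSpace α] {μ : Measure α} [SFinite μ] {I : Set ι} {A : ι → Set α}
    (hI : ¬ I.Countable) (hA : ∀ i ∈ I, NullMeasurableSet (A i) μ)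
    (hd : I.PairwiseDisjoint A) :
    ∃ i ∈ I, μ (A i) = 0 := by
  by_contra! hpos
  have hcount :=
    Measure.countable_meas_pos_of_disjoint_iUnion₀ (μ := μ) (As := fun i : I ↦ A i)
      (fun i ↦ hA i i.2) fun i j hij ↦ (hd i.2 j.2 (Subtype.coe_ne_coe.mpr hij)).aedisjoint
  refine hI (countable_coe_iff.mp (countable_univ_iff.mp (hcount.mono fun i _ ↦ ?_)))
  exact pos_iff_ne_zero.mpr (hpos i i.2)

theorem exists_continuous_hasCompactSupport_apply_inv_eq {G : Type*} [Group G]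
    [TopologicalSpace G] [IsTopologicalGroup G] [LocallyCompactSpace G] :
    ∃ g : G → ℝ, Continuous g ∧ HasCompactSupport g ∧ g 1 = 1 ∧ ∀ x, g x⁻¹ = g x := by
  obtain ⟨f, hf1, -, hfc, -⟩ := exists_continuous_one_zero_of_isCompact isCompact_singleton
    isClosed_empty (disjoint_empty {(1 : G)})
  exact ⟨fun x ↦ f x * f x⁻¹, by fun_prop, hfc.mul_right, by simp [hf1 rfl],
    fun _ ↦ by simp [mul_comm]⟩

theorem HasCompactSupport.isCompact_setOf_le {X : Type*} [TopologicalSpace X]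
    {g : X → ℝ} (hgc : HasCompactSupport g) (hg : Continuous g) {r : ℝ} (hr : 0 < r) :
    IsCompact {x | r ≤ g x} :=
  hgc.of_isClosed_subset (isClosed_le continuous_const hg) fun _ hx ↦
    subset_tsupport g fun h ↦ hr.not_ge (h ▸ hx)

theorem Continuous.setOf_le_subset_interior {X : Type*} [TopologicalSpace X]
    {g : X → ℝ} (hg : Continuous g) {r r' : ℝ} (h : r' < r) :
    {x | r ≤ g x} ⊆ interior {x | r' ≤ g x} :=
  fun _ hx ↦ interior_maximal (ofPred_subset_ofPred.mpr fun _ ↦ le_of_lt)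
    (isOpen_lt continuous_const hg) (h.trans_le hx)

theorem disjoint_mul_diff_interior_mul {M : Type*} [TopologicalSpace M] [Mul M]
    {V W S : Set M} (h : V ⊆ interior W) : Disjoint (V * S) ((W * S) \ (interior W * S)) :=
  disjoint_sdiff_right.mono_left (mul_subset_mul_right h)

theorem Continuous.pairwise_disjoint_setOf_le_mul_diff_interior_mul {M : Type*}
    [TopologicalSpace M] [Mul M] {g : M → ℝ} (hg : Continuous g) (S : Set M) :
    Pairwise (Disjoint on (fun r ↦ ({x | r ≤ g x} * S) \ (interior {x | r ≤ g x} * S))) :=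
  (pairwise_disjoint_on _).mpr fun _ _ h ↦ (disjoint_mul_diff_interior_mul
    (hg.setOf_le_subset_interior h)).symm.mono_right sdiff_subset

theorem stmt5_general {G : Type*} [CommGroup G] [TopologicalSpace G] [IsTopologicalGroup G]
    [LocallyCompactSpace G] [MeasurableSpace G] [BorelSpace G]
    (μ : Measure G) [μ.IsHaarMeasure]
    (S : Subgroup G) (hS : IsClosed (S : Set G))
    (hSc : (S : Set G).Countable ∨ IsCompact (S : Set G)) :
    ∃ W : Set G, IsCompact W ∧ W = W⁻¹ ∧ W ∈ nhds (1 : G) ∧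
      μ ((W * (S : Set G)) \ (interior W * (S : Set G))) = 0 := by
  obtain ⟨g, hg, hgc, hg1, hg_inv⟩ := exists_continuous_hasCompactSupport_apply_inv_eq (G := G)
  set W : ℝ → Set G := fun r ↦ {x | r ≤ g x}
  have hW (r : ℝ) (hr : 0 < r) : IsCompact (W r) := hgc.isCompact_setOf_le hg hr
  have hWS (r : ℝ) (hr : 0 < r) : IsClosed (W r * (S : Set G)) :=
    hS.mul_left_of_isCompact (hW r hr)
  have : SigmaFinite (μ.restrict (W (1 / 2) * (S : Set G))) :=
    ((hW _ one_half_pos).isSigmaCompact_mul hSc).sigmaFinite_restrict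
      (hWS _ one_half_pos).measurableSet
  obtain ⟨r, ⟨hr₀, hr₁⟩, hr⟩ :=
    (μ.restrict (W (1 / 2) * (S : Set G))).exists_mem_measure_eq_zero_of_pairwiseDisjoint
      (A := fun r ↦ (W r * (S : Set G)) \ (interior (W r) * (S : Set G)))
      (I := Ioo (1 / 2) 1) (by norm_num)
      (fun r hr ↦ ((hWS r (one_half_pos.trans hr.1)).measurableSet.diff
        isOpen_interior.mul_right.measurableSet).nullMeasurableSet)
      ((hg.pairwise_disjoint_setOf_le_mul_diff_interior_mul S).set_pairwise _)
  have hr_sub : (W r * (S : Set G)) \ (interior (W r) * (S : Set G)) ⊆ W (1 / 2) * (S : Set G) :=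
    sdiff_subset.trans (mul_subset_mul_right fun x hx ↦ hr₀.le.trans hx)
  refine ⟨W r, hW r (one_half_pos.trans hr₀), ?_, ?_, ?_⟩
  · ext x
    simp [W, hg_inv]
  · exact mem_interior_iff_mem_nhds.mp
      (hg.setOf_le_subset_interior hr₁ (by simp [hg1]))
  · rwa [Measure.restrict_eq_self _ hr_sub] at hr

/-- For a locally compact abelian group `G` with Haar measure `μ` and a
closed subgroup `S` that is countable or compact, there is a compact symmetric
neighbourhood `W` of the identity with `μ(WS \ (Int W)S) = 0`. -/
theorem stmt5 {G : Type*} [CommGroup G] [TopologicalSpace G] [IsTopologicalGroup G]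
    [LocallyCompactSpace G] [T2Space G] [MeasurableSpace G] [BorelSpace G]
    (μ : Measure G) [μ.IsHaarMeasure]
    (S : Subgroup G) (hS : IsClosed (S : Set G))
    (hSc : (S : Set G).Countable ∨ IsCompact (S : Set G)) :
    ∃ W : Set G, IsCompact W ∧ W = W⁻¹ ∧ W ∈ nhds (1 : G) ∧
      μ ((W * (S : Set G)) \ (interior W * (S : Set G))) = 0 :=
  stmt5_general μ S hS hSc
end

section
/- Let (G, X) be a second-countable transformation group. Let z ∈ X and let (x_n) be a sequence in X, with S_z and all S_{x_n} normal in G. Assume that the orbit G·z is locally closed in X and that S_z is compact. Let k be a positive integer, and assume that there exists a real number R > k−1 such that for every open neighbourhood U of z with φ_z^{-1}(U) relatively compact in G one has liminf_n ν_{x_n}(q_{x_n}(φ_{x_n}^{-1}(U))) ≥ R·ν_z(q_z(φ_z^{-1}(U))). Then for every open neighbourhood V of z such that φ_z^{-1}(V) is relatively compact, there exists a compact neighbourhood N of z with N ⊆ V such that liminf_n ν_{x_n}(q_{x_n}(φ_{x_n}^{-1}(N))) > (k−1)·ν_z(q_z(φ_z^{-1}(N))). -/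
open MeasureTheory Filter
open scoped Pointwise Topology ENNReal

/-- The Weil formula: `∫_G f dμ = ∫_{G/S} ∫_S f(st) dα(t) dν(sS)` for all `f ∈ C_c(G)`. -/
def IsWeilTriple {G : Type*} [Group G] [TopologicalSpace G] [MeasurableSpace G]
    (μ : Measure G) (S : Subgroup G) (α : Measure S) (ν : Measure (G ⧸ S)) : Prop :=
  ∀ f : G → ℝ, Continuous f → HasCompactSupport f →
    ∫ s, f s ∂μ = ∫ c : G ⧸ S, (∫ t : S, f (Quotient.out c * (t : G)) ∂α) ∂ν

/-- Right invariance of a measure on the quotient `G ⧸ S` (for `S` normal, the map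
`sS ↦ sgS` is well defined; it sends `mk '' A` to `mk '' (A g)`). -/
def IsRightInvariantQuot {G : Type*} [Group G] [MeasurableSpace G]
    (S : Subgroup G) (ν : Measure (G ⧸ S)) : Prop :=
  ∀ g : G, ∀ A : Set G,
    ν (QuotientGroup.mk '' ((fun s => s * g) '' A)) = ν (QuotientGroup.mk '' A)

open Set MulAction

/-!
Take an Urysohn function `ψ` with `ψ z = 1` whose support is a compact subset of `V`, and
compare the compact superlevel sets `N_t = {t ≤ ψ}` with the open sets `U_t = {t < ψ}`. Along the
orbit map `G ⧸ S_z → X` the differences `N_t \ U_t` pull back to the level sets of `ψ`, which are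
disjoint and lie in a set of finite `ν_z`-measure: since `S_z` is compact, the Weil formula gives
every compact subset of `G` an image of finite measure. So for all but countably many
`t ∈ (0, 1)` the sets `N_t` and `U_t` have the same `ν_z`-measure, which the Weil formula also
makes positive. For such `t`, `(k - 1) ν_z(N_t) < R ν_z(U_t)`, and the hypothesis for `U_t`
together with `U_t ⊆ N_t` bounds this by the `liminf` for `N_t`.
-/

theorem MeasureTheory.Measure.exists_measure_setOf_le_eq_lt {Ω : Type*} [MeasurableSpace Ω]
    (ν : Measure Ω) {h : Ω → ℝ} (hh : Measurable h) {a b : ℝ} (hab : a < b)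
    (hfin : ν {ω | a < h ω} ≠ ∞) :
    ∃ t ∈ Ioo a b, ν {ω | t ≤ h ω} = ν {ω | t < h ω} := by
  have : IsFiniteMeasure (ν.restrict {ω | a < h ω}) :=
    ⟨by rwa [Measure.restrict_apply_univ, lt_top_iff_ne_top]⟩
  obtain ⟨t, ht, hnull⟩ : ∃ t ∈ Ioo a b, ¬ 0 < ν.restrict {ω | a < h ω} {ω | h ω = t} :=
    not_subset.mp fun hsub ↦ mt Cardinal.Real.Ioo_countable_iff.mp hab.not_ge
      ((Measure.countable_meas_level_set_pos hh).mono hsub)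
  have hlevel : ν {ω | h ω = t} = 0 := by
    have hsub : {ω | h ω = t} ⊆ {ω | a < h ω} := fun ω (hω : h ω = t) ↦ show a < h ω from hω ▸ ht.1
    rwa [not_lt, nonpos_iff_eq_zero, Measure.restrict_eq_self (μ := ν) hsub] at hnull
  refine ⟨t, ht, le_antisymm ?_ (measure_mono fun ω (hω : t < h ω) ↦ hω.le)⟩
  calc ν {ω | t ≤ h ω} ≤ ν ({ω | t < h ω} ∪ {ω | h ω = t}) :=
        measure_mono fun ω (hω : t ≤ h ω) ↦ (eq_or_lt_of_le hω).symm.imp id Eq.symm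
    _ ≤ ν {ω | t < h ω} + ν {ω | h ω = t} := measure_union_le _ _
    _ = ν {ω | t < h ω} := by rw [hlevel, add_zero]

theorem MulAction.mk_image_setOf_smul_mem {G X : Type*} [Group G] [MulAction G X] (x : X)
    (W : Set X) :
    ((↑) '' {s : G | s • x ∈ W} : Set (G ⧸ stabilizer G x)) = ofQuotientStabilizer G x ⁻¹' W := by
  ext c
  induction c using QuotientGroup.induction_on with
  | H g => exact ⟨fun ⟨s, hs, hsg⟩ ↦ by rwa [mem_preimage, ← hsg], fun hg ↦ ⟨g, hg, rfl⟩⟩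

theorem QuotientGroup.mk_out_mul_coe {G : Type*} [Group G] {S : Subgroup G} (c : G ⧸ S) (t : S) :
    ((c.out * t : G) : G ⧸ S) = c :=
  (QuotientGroup.mk_mul_of_mem _ t.2).trans (QuotientGroup.out_eq' c)

namespace IsWeilTriple

variable {G : Type*} [Group G] [TopologicalSpace G] [IsTopologicalGroup G] [LocallyCompactSpace G]
  [MeasurableSpace G] [BorelSpace G] {μ : Measure G} [μ.IsOpenPosMeasure]
  [IsFiniteMeasureOnCompacts μ] {S : Subgroup G} {α : Measure S} {ν : Measure (G ⧸ S)}

theorem measure_mk_image_pos (hW : IsWeilTriple μ S α ν) {A : Set G} (hA : IsOpen A)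
    (hne : A.Nonempty) : 0 < ν ((↑) '' A) := by
  obtain ⟨g, hg⟩ := hne
  obtain ⟨f, hf1, hf0, hfc, hf01⟩ := exists_continuous_one_zero_of_isCompact isCompact_singleton
    hA.isClosed_compl (disjoint_singleton_left.mpr (not_not_intro hg))
  have hpos : 0 < ∫ s, f s ∂μ :=
    f.continuous.integral_pos_of_hasCompactSupport_nonneg_nonzero hfc (fun y ↦ (hf01 y).1)
      (x := g) (by simp [hf1 (mem_singleton g)])
  rw [hW f f.continuous hfc] at hpos
  refine pos_iff_ne_zero.mpr fun hnull ↦ hpos.ne' (integral_eq_zero_of_ae ?_)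
  filter_upwards [measure_eq_zero_iff_ae_notMem.mp hnull] with c hc
  have hzero : ∀ t : S, f (c.out * t) = 0 :=
    fun t ↦ hf0 fun hmem ↦ hc ⟨_, hmem, QuotientGroup.mk_out_mul_coe c t⟩
  simp [hzero]

theorem measure_mk_image_lt_top (hW : IsWeilTriple μ S α ν) (hS : IsCompact (S : Set G))
    [IsFiniteMeasure α] [NeZero α] {K : Set G} (hK : IsCompact K) : ν ((↑) '' K) < ∞ := by
  -- `K'` is a union of cosets, so the fibre integral `F` below is `α(S)` on its image.
  set K' : Set G := insert 1 K * S
  have hK'S : ∀ g ∈ K', ∀ s ∈ S, g * s ∈ K' := by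
    rintro _ ⟨k, hk, s, hs, rfl⟩ t ht
    exact ⟨k, hk, s * t, S.mul_mem hs ht, (mul_assoc k s t).symm⟩
  obtain ⟨f, hf1, -, hfc, hf01⟩ := exists_continuous_one_zero_of_isCompact
    ((hK.insert 1).mul hS) isClosed_empty (disjoint_empty _)
  have hpos : 0 < ∫ s, f s ∂μ :=
    f.continuous.integral_pos_of_hasCompactSupport_nonneg_nonzero hfc (fun y ↦ (hf01 y).1)
      (x := 1) (by simp [hf1 (⟨1, mem_insert _ _, 1, S.one_mem, mul_one 1⟩ : (1 : G) ∈ K')])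
  rw [hW f f.continuous hfc] at hpos
  set F : G ⧸ S → ℝ := fun c ↦ ∫ t : S, f (c.out * t) ∂α
  have hFK : ∀ c ∈ ((↑) '' K' : Set (G ⧸ S)), F c = α.real univ := by
    rintro _ ⟨g, hg, rfl⟩
    have hout : (g : G ⧸ S).out = g * (g⁻¹ * (g : G ⧸ S).out) := (mul_inv_cancel_left _ _).symm
    have hgS : g⁻¹ * (g : G ⧸ S).out ∈ S := QuotientGroup.eq.mp (QuotientGroup.out_eq' _).symm
    have hone : ∀ t : S, f ((g : G ⧸ S).out * t) = 1 :=
      fun t ↦ hf1 (hout ▸ hK'S _ (hK'S g hg _ hgS) _ t.2)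
    simp [F, hone]
  -- Non-integrable functions have integral `0`, so `∫ F ∂ν = ∫ f ∂μ > 0` forces integrability.
  calc ν ((↑) '' K) ≤ ν {c | α.real univ ≤ F c} :=
        measure_mono <| (image_mono <| (subset_insert 1 K).trans
          (subset_mul_left _ S.one_mem)).trans fun c hc ↦ (hFK c hc).ge
    _ < ∞ := (Integrable.of_integral_ne_zero hpos.ne').measure_ge_lt_top measureReal_univ_pos

end IsWeilTriple

section Orbit

variable {G X : Type*} [Group G] [TopologicalSpace G] [IsTopologicalGroup G]
  [LocallyCompactSpace G] [MeasurableSpace G] [BorelSpace G] {μ : Measure G}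
  [μ.IsOpenPosMeasure] [IsFiniteMeasureOnCompacts μ] [MulAction G X] {z : X}
  {α : Measure (stabilizer G z)} {ν : Measure (G ⧸ stabilizer G z)}

theorem IsWeilTriple.measure_preimage_ofQuotientStabilizer_pos [TopologicalSpace X]
    [ContinuousSMul G X] (hW : IsWeilTriple μ (stabilizer G z) α ν) {U : Set X} (hU : IsOpen U)
    (hzU : z ∈ U) : 0 < ν (ofQuotientStabilizer G z ⁻¹' U) := by
  rw [← mk_image_setOf_smul_mem]
  exact hW.measure_mk_image_pos (hU.preimage (continuous_id.smul continuous_const))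
    ⟨1, by simpa using hzU⟩

theorem IsWeilTriple.measure_preimage_ofQuotientStabilizer_lt_top
    (hW : IsWeilTriple μ (stabilizer G z) α ν) (hS : IsCompact (stabilizer G z : Set G))
    [IsFiniteMeasure α] [NeZero α] {W : Set X} (hWc : IsCompact (closure {s : G | s • z ∈ W})) :
    ν (ofQuotientStabilizer G z ⁻¹' W) < ∞ := by
  rw [← mk_image_setOf_smul_mem]
  exact (measure_mono (image_mono subset_closure)).trans_lt (hW.measure_mk_image_lt_top hS hWc)

end Orbit

theorem exists_continuousMap_one_superlevel_subset {X : Type*} [TopologicalSpace X] [R1Space X]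
    [LocallyCompactSpace X] {z : X} {V : Set X} (hV : IsOpen V) (hzV : z ∈ V) :
    ∃ ψ : C(X, ℝ), ψ z = 1 ∧ ∀ t > 0, IsCompact {y | t ≤ ψ y} ∧ {y | t ≤ ψ y} ⊆ V := by
  obtain ⟨ψ, hψz, hψc, hψV, -⟩ := exists_continuousMap_one_of_isCompact_subset_isOpen
    isCompact_singleton hV (singleton_subset_iff.mpr hzV)
  have hsupp : ∀ t > 0, {y | t ≤ ψ y} ⊆ tsupport ψ :=
    fun t ht _ hy ↦ subset_tsupport _ (ht.trans_le hy).ne'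
  exact ⟨ψ, hψz (mem_singleton z), fun t ht ↦
    ⟨hψc.of_isClosed_subset (isClosed_le continuous_const ψ.continuous) (hsupp t ht),
      (hsupp t ht).trans hψV⟩⟩

theorem ENNReal.natCast_sub_one_lt_ofReal {k : ℕ} (hk : 0 < k) {R : ℝ} (hR : (k : ℝ) - 1 < R) :
    ((k - 1 : ℕ) : ℝ≥0∞) < ENNReal.ofReal R := by
  rw [← ENNReal.ofReal_natCast, ENNReal.ofReal_lt_ofReal_iff', Nat.cast_sub hk, Nat.cast_one]
  exact ⟨hR, (sub_nonneg.mpr (Nat.one_le_cast.mpr hk)).trans_lt hR⟩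

theorem stmt6_general {G X : Type*} [Group G] [TopologicalSpace G] [IsTopologicalGroup G]
    [LocallyCompactSpace G]
    [TopologicalSpace X] [T2Space X] [LocallyCompactSpace X]
    [MulAction G X] [ContinuousSMul G X]
    [MeasurableSpace G] [BorelSpace G]
    (μ : Measure G) [μ.IsHaarMeasure]
    (z : X) (x : ℕ → X)
    (hSz : IsCompact (MulAction.stabilizer G z : Set G))
    (αz : Measure (MulAction.stabilizer G z)) (hαz : αz.IsHaarMeasure)
    (νz : Measure (G ⧸ MulAction.stabilizer G z))
    (ν : ∀ n, Measure (G ⧸ MulAction.stabilizer G (x n)))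
    (hWeilz : IsWeilTriple μ (MulAction.stabilizer G z) αz νz)
    (k : ℕ) (hk : 0 < k) (R : ℝ) (hR : (k : ℝ) - 1 < R)
    (hliminf : ∀ U : Set X, IsOpen U → z ∈ U →
      IsCompact (closure {s : G | s • z ∈ U}) →
      ENNReal.ofReal R * νz (QuotientGroup.mk '' {s : G | s • z ∈ U}) ≤
        Filter.liminf (fun n => (ν n) (QuotientGroup.mk '' {s : G | s • x n ∈ U})) atTop) :
    ∀ V : Set X, IsOpen V → z ∈ V → IsCompact (closure {s : G | s • z ∈ V}) →
      ∃ N : Set X, IsCompact N ∧ N ∈ 𝓝 z ∧ N ⊆ V ∧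
        ((k - 1 : ℕ) : ℝ≥0∞) * νz (QuotientGroup.mk '' {s : G | s • z ∈ N}) <
          Filter.liminf (fun n => (ν n) (QuotientGroup.mk '' {s : G | s • x n ∈ N})) atTop := by
  intro V hV hzV hVc
  have : αz.IsHaarMeasure := hαz
  have : CompactSpace (stabilizer G z) := isCompact_iff_compactSpace.mp hSz
  set π := ofQuotientStabilizer G z
  obtain ⟨ψ, hψz, hψ⟩ := exists_continuousMap_one_superlevel_subset hV hzV
  have hfin : νz (π ⁻¹' V) < ∞ := hWeilz.measure_preimage_ofQuotientStabilizer_lt_top hSz hVc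
  obtain ⟨t, ⟨ht0, ht1⟩, hteq⟩ := νz.exists_measure_setOf_le_eq_lt (h := ψ ∘ π)
    (QuotientGroup.measurable_from_quotient.mpr
      (ψ.continuous.comp (continuous_id.smul continuous_const)).measurable) zero_lt_one
    ((measure_mono (preimage_mono fun y (hy : 0 < ψ y) ↦ (hψ _ hy).2 (le_refl (ψ y)))).trans_lt
      hfin).ne
  set U := {y | t < ψ y}
  set N := {y | t ≤ ψ y}
  obtain ⟨hNc, hNV⟩ := hψ t ht0
  have hU : IsOpen U := isOpen_lt continuous_const ψ.continuous
  have hzU : z ∈ U := by simpa [U, hψz] using ht1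
  have hUN : U ⊆ N := fun y (hy : t < ψ y) ↦ hy.le
  refine ⟨N, hNc, mem_of_superset (hU.mem_nhds hzU) hUN, hNV, ?_⟩
  calc ((k - 1 : ℕ) : ℝ≥0∞) * νz ((↑) '' {s : G | s • z ∈ N})
      = (k - 1 : ℕ) * νz (π ⁻¹' U) := by
        rw [mk_image_setOf_smul_mem]
        exact congrArg _ hteq
    _ < ENNReal.ofReal R * νz (π ⁻¹' U) :=
        ENNReal.mul_lt_mul_left (hWeilz.measure_preimage_ofQuotientStabilizer_pos hU hzU).ne'
          ((measure_mono (preimage_mono (hUN.trans hNV))).trans_lt hfin).ne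
          (ENNReal.natCast_sub_one_lt_ofReal hk hR)
    _ ≤ liminf (fun n ↦ ν n ((↑) '' {s : G | s • x n ∈ U})) atTop := by
        rw [← mk_image_setOf_smul_mem]
        exact hliminf U hU hzU (hVc.of_isClosed_subset isClosed_closure
          (closure_mono fun _ hs ↦ hNV (hUN hs)))
    _ ≤ _ := liminf_le_liminf (.of_forall fun n ↦ measure_mono (image_mono fun _ hs ↦ hUN hs))

/-- If `G·z` is locally closed, `S_z` is compact, and there is `R > k − 1`
such that `liminf_n ν_{x_n}(q_{x_n}(φ_{x_n}⁻¹ U)) ≥ R·ν_z(q_z(φ_z⁻¹ U))` for every open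
neighbourhood `U` of `z` with relatively compact `φ_z⁻¹(U)`, then every open
neighbourhood `V` of `z` with relatively compact `φ_z⁻¹(V)` contains a compact
neighbourhood `N` of `z` with
`liminf_n ν_{x_n}(q_{x_n}(φ_{x_n}⁻¹ N)) > (k−1)·ν_z(q_z(φ_z⁻¹ N))`. -/
theorem stmt6 {G X : Type*} [Group G] [TopologicalSpace G] [IsTopologicalGroup G]
    [LocallyCompactSpace G] [T2Space G] [SecondCountableTopology G]
    [TopologicalSpace X] [T2Space X] [LocallyCompactSpace X] [SecondCountableTopology X]
    [MulAction G X] [ContinuousSMul G X]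
    [MeasurableSpace G] [BorelSpace G]
    (μ : Measure G) [μ.IsHaarMeasure]
    (z : X) (x : ℕ → X)
    (hzN : (MulAction.stabilizer G z).Normal)
    (hnN : ∀ n, (MulAction.stabilizer G (x n)).Normal)
    (hlc : IsLocallyClosed (MulAction.orbit G z))
    (hSz : IsCompact (MulAction.stabilizer G z : Set G))
    (αz : Measure (MulAction.stabilizer G z)) (hαz : αz.IsHaarMeasure)
    (α : ∀ n, Measure (MulAction.stabilizer G (x n))) (hα : ∀ n, (α n).IsHaarMeasure)
    (νz : Measure (G ⧸ MulAction.stabilizer G z))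
    (ν : ∀ n, Measure (G ⧸ MulAction.stabilizer G (x n)))
    (hWeilz : IsWeilTriple μ (MulAction.stabilizer G z) αz νz)
    (hWeil : ∀ n, IsWeilTriple μ (MulAction.stabilizer G (x n)) (α n) (ν n))
    (hinvz : IsRightInvariantQuot (MulAction.stabilizer G z) νz)
    (hinv : ∀ n, IsRightInvariantQuot (MulAction.stabilizer G (x n)) (ν n))
    (k : ℕ) (hk : 0 < k) (R : ℝ) (hR : (k : ℝ) - 1 < R)
    (hliminf : ∀ U : Set X, IsOpen U → z ∈ U →
      IsCompact (closure {s : G | s • z ∈ U}) →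
      ENNReal.ofReal R * νz (QuotientGroup.mk '' {s : G | s • z ∈ U}) ≤
        Filter.liminf (fun n => (ν n) (QuotientGroup.mk '' {s : G | s • x n ∈ U})) atTop) :
    ∀ V : Set X, IsOpen V → z ∈ V → IsCompact (closure {s : G | s • z ∈ V}) →
      ∃ N : Set X, IsCompact N ∧ N ∈ 𝓝 z ∧ N ⊆ V ∧
        ((k - 1 : ℕ) : ℝ≥0∞) * νz (QuotientGroup.mk '' {s : G | s • z ∈ N}) <
          Filter.liminf (fun n => (ν n) (QuotientGroup.mk '' {s : G | s • x n ∈ N})) atTop :=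
  stmt6_general μ z x hSz αz hαz νz ν hWeilz k hk R hR hliminf
end

section
/- Let (G, X) be a second-countable transformation group with S_z and all S_{x_n} normal in G, where z ∈ X and (x_n) is a sequence in X. Assume that the orbit G·z is locally closed in X and that S_z is compact. Let k be a positive integer, and suppose there exists a real number R > k−1 such that for every open neighbourhood V of z with φ_z^{-1}(V) relatively compact in G one has liminf_n ν_{x_n}(q_{x_n}(φ_{x_n}^{-1}(V))) ≥ R·ν_z(q_z(φ_z^{-1}(V))). Then there exists a sequence (W_m) of compact neighbourhoods of z with W_{m+1} ⊆ W_m which forms a neighbourhood basis at z, such that for each m ≥ 1, liminf_n ν_{x_n}(q_{x_n}(φ_{x_n}^{-1}(W_m))) > (k−1)·ν_z(q_z(φ_z^{-1}(W_m))). -/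
open MeasureTheory Filter
open scoped Pointwise Topology ENNReal

/-!
By the open mapping theorem for the orbit (locally compact, being locally closed), some
neighbourhood `W₀` of `z` has compact preimage under `s ↦ s • z`. Given a neighbourhood `U` of `z`,
take an Urysohn function `f` supported in `U ∩ W₀` with `f z = 1`. The antitone function
`t ↦ ν_z(q_z(φ_z⁻¹ {f ≥ t}))` is continuous at some `t ∈ (0, 1)`, and there the open set
`V = {f > t}` and the compact set `W = {f ≥ t}` have the same `ν_z`-measure, which the Weil formula
makes positive and finite. Hence
`(k - 1) ν_z(W) < R ν_z(V) ≤ liminf ν_{x_n}(V) ≤ liminf ν_{x_n}(W)`.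
Such sets `W` form a neighbourhood basis of `z`, from which first countability extracts a
decreasing one.
-/

open Set MulAction

theorem QuotientGroup.out_mem_of_mem_image_mk {G : Type*} [Group G] {S : Subgroup G} {A : Set G}
    (hA : ∀ a ∈ A, ∀ t ∈ S, a * t ∈ A) {c : G ⧸ S} (hc : c ∈ QuotientGroup.mk '' A) :
    Quotient.out c ∈ A := by
  obtain ⟨a, ha, rfl⟩ := hc
  obtain ⟨t, ht⟩ := QuotientGroup.mk_out_eq_mul S a
  exact ht ▸ hA a ha t t.2

namespace IsWeilTriple

variable {G : Type*} [Group G] [TopologicalSpace G] [MeasurableSpace G] [BorelSpace G]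
  {μ : Measure G} [μ.IsHaarMeasure] {S : Subgroup G} {α : Measure S} {ν : Measure (G ⧸ S)}

theorem integral_pos (hW : IsWeilTriple μ S α ν) {f : G → ℝ} (hf : Continuous f)
    (hfc : HasCompactSupport f) (hf0 : 0 ≤ f) {g : G} (hg : f g ≠ 0) :
    0 < ∫ c : G ⧸ S, (∫ t : S, f (Quotient.out c * t) ∂α) ∂ν :=
  hW f hf hfc ▸ hf.integral_pos_of_hasCompactSupport_nonneg_nonzero hfc hf0 hg

variable [IsTopologicalGroup G] [LocallyCompactSpace G]

theorem measure_image_mk_ne_zero (hW : IsWeilTriple μ S α ν) {U : Set G} (hU : IsOpen U)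
    (hne : U.Nonempty) : ν (QuotientGroup.mk '' U) ≠ 0 := by
  obtain ⟨u, hu⟩ := hne
  obtain ⟨f, hfu, hfU, hfc, hf01⟩ := exists_continuous_one_zero_of_isCompact isCompact_singleton
    hU.isClosed_compl (disjoint_compl_right_iff_subset.mpr (singleton_subset_iff.mpr hu))
  have hsupp : {c : G ⧸ S | ∫ t : S, f (Quotient.out c * t) ∂α ≠ 0} ⊆ QuotientGroup.mk '' U := by
    intro c hc
    obtain ⟨t, ht⟩ : ∃ t : S, f (Quotient.out c * t) ≠ 0 := by
      by_contra! h
      simp [h] at hc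
    refine ⟨_, not_not.mp fun h => ht (hfU h), ?_⟩
    rw [QuotientGroup.mk_mul_of_mem _ t.2, QuotientGroup.out_eq']
  intro h0
  have hF : (fun c : G ⧸ S => ∫ t : S, f (Quotient.out c * t) ∂α) =ᵐ[ν] 0 :=
    ae_iff.mpr (measure_mono_null hsupp h0)
  have := hW.integral_pos f.continuous hfc (fun g => (hf01 g).1) (g := u) (by simp [hfu rfl])
  rw [integral_congr_ae hF] at this
  simp at this

theorem measure_image_mk_ne_top (hW : IsWeilTriple μ S α ν) (hα : α.IsHaarMeasure)
    (hS : IsCompact (S : Set G)) {A : Set G} (hA : IsCompact A)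
    (hAS : ∀ a ∈ A, ∀ t ∈ S, a * t ∈ A) :
    ν (QuotientGroup.mk '' A) ≠ ∞ := by
  rcases A.eq_empty_or_nonempty with rfl | ⟨a, ha⟩
  · simp
  have : CompactSpace S := isCompact_iff_compactSpace.mp hS
  obtain ⟨f, hfA, -, hfc, hf01⟩ := exists_continuous_one_zero_of_isCompact hA isClosed_empty
    (disjoint_empty A)
  set F := fun c : G ⧸ S => ∫ t : S, f (Quotient.out c * t) ∂α
  have hF : Integrable F ν := Integrable.of_integral_ne_zero
    (hW.integral_pos f.continuous hfc (fun g => (hf01 g).1) (g := a) (by simp [hfA ha])).ne'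
  -- on `mk '' A` the fibre integral `F` is the total mass of `α`
  refine (lt_of_le_of_lt (measure_mono fun c hc => ?_)
    (hF.measure_norm_ge_lt_top (measureReal_univ_pos (μ := α)))).ne
  have hFc : F c = α.real univ := by
    simp [F, fun t : S => hfA (hAS _ (QuotientGroup.out_mem_of_mem_image_mk hAS hc) t t.2)]
  simp [hFc, le_abs_self]

end IsWeilTriple

theorem Monotone.exists_mem_Ioo_preimage_Ioi_eq_Ici {X β : Type*}
    [LinearOrder β] [TopologicalSpace β] [OrderTopology β] [SecondCountableTopology β]
    {m : Set X → β} (hm : Monotone m) (f : X → ℝ) {a b : ℝ} (hab : a < b) :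
    ∃ t ∈ Ioo a b, m (f ⁻¹' Ioi t) = m (f ⁻¹' Ici t) := by
  set g := fun t => m (f ⁻¹' Ici t)
  have hg : Antitone g := fun s t hst => hm (preimage_mono (Ici_subset_Ici.2 hst))
  obtain ⟨t, ht, hcont⟩ : ∃ t ∈ Ioo a b, ContinuousAt g t := by
    obtain ⟨t, ht, hcont⟩ := (hg.countable_not_continuousAt.dense_compl ℝ).exists_mem_open
      isOpen_Ioo (nonempty_Ioo.2 hab)
    exact ⟨t, hcont, not_not.mp ht⟩
  refine ⟨t, ht, le_antisymm (hm (preimage_mono Ioi_subset_Ici_self)) ?_⟩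
  -- `m (f ⁻¹' Ioi t)` bounds `g` on `Ioi t` from above, and `g t` is the right limit of `g` at `t`
  refine _root_.le_of_tendsto
    (hcont.tendsto.mono_left nhdsWithin_le_nhds : Tendsto g (𝓝[>] t) _) ?_
  filter_upwards [self_mem_nhdsWithin] with s hs using hm (preimage_mono (Ici_subset_Ioi.2 hs))

theorem Monotone.exists_isOpen_subset_isCompact_eq {X β : Type*} [TopologicalSpace X]
    [RegularSpace X] [LocallyCompactSpace X]
    [LinearOrder β] [TopologicalSpace β] [OrderTopology β] [SecondCountableTopology β]
    {m : Set X → β} (hm : Monotone m) {O : Set X} (hO : IsOpen O) {z : X} (hz : z ∈ O) :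
    ∃ V W, IsOpen V ∧ z ∈ V ∧ V ⊆ W ∧ IsCompact W ∧ W ⊆ O ∧ m V = m W := by
  obtain ⟨f, hfz, hfO, hfc, -⟩ := exists_continuous_one_zero_of_isCompact isCompact_singleton
    hO.isClosed_compl (disjoint_compl_right_iff_subset.mpr (singleton_subset_iff.mpr hz))
  obtain ⟨t, ⟨ht0, ht1⟩, hmt⟩ := hm.exists_mem_Ioo_preimage_Ioi_eq_Ici f zero_lt_one
  have hpos : f ⁻¹' Ici t ⊆ {y | f y ≠ 0} := fun y hy h => by
    simp only [mem_preimage, mem_Ici, h] at hy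
    linarith
  refine ⟨f ⁻¹' Ioi t, f ⁻¹' Ici t, isOpen_Ioi.preimage f.continuous, ?_,
    preimage_mono Ioi_subset_Ici_self, hfc.of_isClosed_subset
      (isClosed_Ici.preimage f.continuous) (hpos.trans (subset_tsupport f)), ?_, hmt⟩
  · simpa [hfz rfl] using ht1
  · exact fun y hy => not_not.mp fun h => hpos hy (hfO h)

theorem exists_mem_nhds_isCompact_setOf_smul_mem {G X : Type*} [Group G] [TopologicalSpace G]
    [IsTopologicalGroup G] [LocallyCompactSpace G] [SigmaCompactSpace G] [TopologicalSpace X]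
    [T2Space X] [LocallyCompactSpace X] [MulAction G X] [ContinuousSMul G X] {z : X}
    (hlc : IsLocallyClosed (orbit G z)) (hSz : IsCompact (stabilizer G z : Set G)) :
    ∃ W ∈ 𝓝 z, IsCompact {s : G | s • z ∈ W} := by
  have : LocallyCompactSpace (orbit G z) := hlc.locallyCompactSpace
  have : ContinuousSMul G (orbit G z) :=
    Topology.IsInducing.subtypeVal.continuousSMul continuous_id rfl
  obtain ⟨K, hKc, hK1⟩ := exists_compact_mem_nhds (1 : G)
  obtain ⟨U, hUo, hU⟩ := isOpen_induced_iff.mp (isOpenMap_smul_of_sigmaCompact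
    (⟨z, mem_orbit_self z⟩ : orbit G z) _ (isOpen_interior (s := K)))
  have hzU : (⟨z, mem_orbit_self z⟩ : orbit G z) ∈ Subtype.val ⁻¹' U :=
    hU ▸ ⟨1, mem_interior_iff_mem_nhds.2 hK1, one_smul _ _⟩
  obtain ⟨W, hW, hWc, hWU⟩ := exists_mem_nhds_isClosed_subset (hUo.mem_nhds hzU)
  refine ⟨W, hW, (hKc.mul hSz).of_isClosed_subset
    (hWc.preimage (continuous_id.smul continuous_const)) fun s hs => ?_⟩
  have hsU : (⟨s • z, mem_orbit z s⟩ : orbit G z) ∈ Subtype.val ⁻¹' U := hWU hs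
  obtain ⟨u, hu, hus⟩ := hU ▸ hsU
  refine ⟨u, interior_subset hu, u⁻¹ * s, ?_, mul_inv_cancel_left u s⟩
  rw [SetLike.mem_coe, mem_stabilizer_iff, mul_smul, inv_smul_eq_iff]
  exact (congrArg Subtype.val hus).symm

theorem exists_isCompact_mem_nhds_subset_lt_liminf {G X : Type*} [Group G] [TopologicalSpace G]
    [IsTopologicalGroup G] [LocallyCompactSpace G] [TopologicalSpace X] [T2Space X]
    [LocallyCompactSpace X] [MulAction G X] [ContinuousSMul G X] [MeasurableSpace G]
    [BorelSpace G] {μ : Measure G} [μ.IsHaarMeasure] {z : X} {x : ℕ → X}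
    (hSz : IsCompact (stabilizer G z : Set G)) {αz : Measure (stabilizer G z)}
    (hαz : αz.IsHaarMeasure) {νz : Measure (G ⧸ stabilizer G z)}
    {ν : ∀ n, Measure (G ⧸ stabilizer G (x n))} (hWeilz : IsWeilTriple μ (stabilizer G z) αz νz)
    {k : ℕ} (hk : 0 < k) {R : ℝ} (hR : (k : ℝ) - 1 < R)
    (hliminf : ∀ V : Set X, IsOpen V → z ∈ V →
      IsCompact (closure {s : G | s • z ∈ V}) →
      ENNReal.ofReal R * νz (QuotientGroup.mk '' {s : G | s • z ∈ V}) ≤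
        liminf (fun n => (ν n) (QuotientGroup.mk '' {s : G | s • x n ∈ V})) atTop)
    {W₀ : Set X} (hW₀ : W₀ ∈ 𝓝 z) (hW₀pre : IsCompact {s : G | s • z ∈ W₀})
    {U : Set X} (hU : U ∈ 𝓝 z) :
    ∃ W ∈ 𝓝 z, (IsCompact W ∧
      ((k - 1 : ℕ) : ℝ≥0∞) * νz (QuotientGroup.mk '' {s : G | s • z ∈ W}) <
        liminf (fun n => (ν n) (QuotientGroup.mk '' {s : G | s • x n ∈ W})) atTop) ∧ W ⊆ U := by
  have hφ : Continuous fun s : G => s • z := continuous_id.smul continuous_const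
  have hmono : Monotone fun B : Set X => νz (QuotientGroup.mk '' {s : G | s • z ∈ B}) :=
    fun B B' h => measure_mono (image_mono fun s hs => h hs)
  obtain ⟨V, W, hVo, hzV, hVW, hW, hWU, hVW_eq⟩ := hmono.exists_isOpen_subset_isCompact_eq
    isOpen_interior (mem_interior_iff_mem_nhds.2 (inter_mem hU hW₀))
  have hWpre : IsCompact {s : G | s • z ∈ W} := hW₀pre.of_isClosed_subset
    (hW.isClosed.preimage hφ) fun s hs => (interior_subset (hWU hs)).2
  have hV0 : νz (QuotientGroup.mk '' {s : G | s • z ∈ V}) ≠ 0 :=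
    hWeilz.measure_image_mk_ne_zero (hVo.preimage hφ) ⟨1, by simpa using hzV⟩
  have hVtop : νz (QuotientGroup.mk '' {s : G | s • z ∈ V}) ≠ ∞ := by
    refine hVW_eq ▸ hWeilz.measure_image_mk_ne_top hαz hSz hWpre fun a ha t ht => ?_
    show (a * t) • z ∈ W
    rwa [mul_smul, mem_stabilizer_iff.mp ht]
  have hlim := hliminf V hVo hzV (hWpre.of_isClosed_subset isClosed_closure
    (closure_minimal (fun s hs => hVW hs) (hW.isClosed.preimage hφ)))
  refine ⟨W, mem_of_superset (hVo.mem_nhds hzV) hVW, ⟨hW, ?_⟩,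
    (hWU.trans interior_subset).trans inter_subset_left⟩
  calc ((k - 1 : ℕ) : ℝ≥0∞) * νz (QuotientGroup.mk '' {s : G | s • z ∈ W})
      = ((k - 1 : ℕ) : ℝ≥0∞) * νz (QuotientGroup.mk '' {s : G | s • z ∈ V}) := by rw [hVW_eq]
    _ < ENNReal.ofReal R * νz (QuotientGroup.mk '' {s : G | s • z ∈ V}) :=
        (ENNReal.mul_lt_mul_iff_left hV0 hVtop).2
          (ENNReal.natCast_lt_ofReal.2 (by rwa [Nat.cast_pred hk]))
    _ ≤ liminf (fun n => (ν n) (QuotientGroup.mk '' {s : G | s • x n ∈ V})) atTop := hlim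
    _ ≤ liminf (fun n => (ν n) (QuotientGroup.mk '' {s : G | s • x n ∈ W})) atTop :=
        liminf_le_liminf (Eventually.of_forall fun n =>
          measure_mono (image_mono fun s hs => hVW hs))

theorem stmt8_general {G X : Type*} [Group G] [TopologicalSpace G] [IsTopologicalGroup G]
    [LocallyCompactSpace G] [SecondCountableTopology G]
    [TopologicalSpace X] [T2Space X] [LocallyCompactSpace X] [SecondCountableTopology X]
    [MulAction G X] [ContinuousSMul G X]
    [MeasurableSpace G] [BorelSpace G]
    (μ : Measure G) [μ.IsHaarMeasure]
    (z : X) (x : ℕ → X)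
    (hlc : IsLocallyClosed (MulAction.orbit G z))
    (hSz : IsCompact (MulAction.stabilizer G z : Set G))
    (αz : Measure (MulAction.stabilizer G z)) (hαz : αz.IsHaarMeasure)
    (νz : Measure (G ⧸ MulAction.stabilizer G z))
    (ν : ∀ n, Measure (G ⧸ MulAction.stabilizer G (x n)))
    (hWeilz : IsWeilTriple μ (MulAction.stabilizer G z) αz νz)
    (k : ℕ) (hk : 0 < k) (R : ℝ) (hR : (k : ℝ) - 1 < R)
    (hliminf : ∀ V : Set X, IsOpen V → z ∈ V →
      IsCompact (closure {s : G | s • z ∈ V}) →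
      ENNReal.ofReal R * νz (QuotientGroup.mk '' {s : G | s • z ∈ V}) ≤
        Filter.liminf (fun n => (ν n) (QuotientGroup.mk '' {s : G | s • x n ∈ V})) atTop) :
    ∃ W : ℕ → Set X,
      (∀ m, IsCompact (W m) ∧ W m ∈ 𝓝 z) ∧
      (∀ m, W (m + 1) ⊆ W m) ∧
      (∀ U ∈ 𝓝 z, ∃ m, W m ⊆ U) ∧
      (∀ m, ((k - 1 : ℕ) : ℝ≥0∞) * νz (QuotientGroup.mk '' {s : G | s • z ∈ W m}) <
        Filter.liminf (fun n => (ν n) (QuotientGroup.mk '' {s : G | s • x n ∈ W m})) atTop) := by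
  obtain ⟨W₀, hW₀, hW₀pre⟩ := exists_mem_nhds_isCompact_setOf_smul_mem hlc hSz
  obtain ⟨W, hW, hbasis⟩ := (hasBasis_self.2 fun U hU =>
    exists_isCompact_mem_nhds_subset_lt_liminf (μ := μ) hSz hαz hWeilz hk hR hliminf hW₀ hW₀pre
      hU).exists_antitone_subbasis
  refine ⟨W, fun m => ⟨(hW m).2.1, (hW m).1⟩, fun m => hbasis.antitone m.le_succ,
    fun U hU => hbasis.mem_iff.1 hU, fun m => (hW m).2.2⟩

/-- If `G·z` is locally closed, `S_z` is compact, all stability subgroups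
are normal, and there is `R > k − 1` such that
`liminf_n ν_{x_n}(q_{x_n}(φ_{x_n}⁻¹ V)) ≥ R·ν_z(q_z(φ_z⁻¹ V))` for every open
neighbourhood `V` of `z` with relatively compact `φ_z⁻¹(V)`, then there is a decreasing
sequence `(W_m)` of compact neighbourhoods of `z` forming a basis at `z` with
`liminf_n ν_{x_n}(q_{x_n}(φ_{x_n}⁻¹ W_m)) > (k−1)·ν_z(q_z(φ_z⁻¹ W_m))` for each `m`. -/
theorem stmt8 {G X : Type*} [Group G] [TopologicalSpace G] [IsTopologicalGroup G]
    [LocallyCompactSpace G] [T2Space G] [SecondCountableTopology G]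
    [TopologicalSpace X] [T2Space X] [LocallyCompactSpace X] [SecondCountableTopology X]
    [MulAction G X] [ContinuousSMul G X]
    [MeasurableSpace G] [BorelSpace G]
    (μ : Measure G) [μ.IsHaarMeasure]
    (z : X) (x : ℕ → X)
    (hzN : (MulAction.stabilizer G z).Normal)
    (hnN : ∀ n, (MulAction.stabilizer G (x n)).Normal)
    (hlc : IsLocallyClosed (MulAction.orbit G z))
    (hSz : IsCompact (MulAction.stabilizer G z : Set G))
    (αz : Measure (MulAction.stabilizer G z)) (hαz : αz.IsHaarMeasure)
    (α : ∀ n, Measure (MulAction.stabilizer G (x n))) (hα : ∀ n, (α n).IsHaarMeasure)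
    (νz : Measure (G ⧸ MulAction.stabilizer G z))
    (ν : ∀ n, Measure (G ⧸ MulAction.stabilizer G (x n)))
    (hWeilz : IsWeilTriple μ (MulAction.stabilizer G z) αz νz)
    (hWeil : ∀ n, IsWeilTriple μ (MulAction.stabilizer G (x n)) (α n) (ν n))
    (hinvz : IsRightInvariantQuot (MulAction.stabilizer G z) νz)
    (hinv : ∀ n, IsRightInvariantQuot (MulAction.stabilizer G (x n)) (ν n))
    (k : ℕ) (hk : 0 < k) (R : ℝ) (hR : (k : ℝ) - 1 < R)
    (hliminf : ∀ V : Set X, IsOpen V → z ∈ V →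
      IsCompact (closure {s : G | s • z ∈ V}) →
      ENNReal.ofReal R * νz (QuotientGroup.mk '' {s : G | s • z ∈ V}) ≤
        Filter.liminf (fun n => (ν n) (QuotientGroup.mk '' {s : G | s • x n ∈ V})) atTop) :
    ∃ W : ℕ → Set X,
      (∀ m, IsCompact (W m) ∧ W m ∈ 𝓝 z) ∧
      (∀ m, W (m + 1) ⊆ W m) ∧
      (∀ U ∈ 𝓝 z, ∃ m, W m ⊆ U) ∧
      (∀ m, ((k - 1 : ℕ) : ℝ≥0∞) * νz (QuotientGroup.mk '' {s : G | s • z ∈ W m}) <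
        Filter.liminf (fun n => (ν n) (QuotientGroup.mk '' {s : G | s • x n ∈ W m})) atTop) :=
  stmt8_general μ z x hlc hSz αz hαz νz ν hWeilz k hk R hR hliminf
end

section
/- Let (G, X) be a transformation group, let z ∈ X, and let V be an open subset of X such that V ∩ (cl(G·z) \ G·z) ≠ ∅, where cl denotes closure in X. Then for every compact subset K of G there exists t ∈ G \ K S_z such that t·z ∈ V. -/
open scoped Pointwise

open MulAction

theorem smul_mem_image_smul_of_mem_mul_stabilizer {G X : Type*} [Group G] [MulAction G X]
    {K : Set G} {z : X} {t : G} (ht : t ∈ K * (stabilizer G z : Set G)) :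
    t • z ∈ (· • z) '' K := by
  obtain ⟨k, hk, s, hs, rfl⟩ := ht
  exact ⟨k, hk, by rw [mul_smul, mem_stabilizer_iff.mp hs]⟩

theorem stmt9_general {G X : Type*} [Group G] [TopologicalSpace G]
    [TopologicalSpace X] [T2Space X]
    [MulAction G X] [ContinuousSMul G X]
    (z : X) (V : Set X) (hV : IsOpen V)
    (hne : (V ∩ (closure (MulAction.orbit G z) \ MulAction.orbit G z)).Nonempty) :
    ∀ K : Set G, IsCompact K →
      ∃ t : G, t ∉ K * (MulAction.stabilizer G z : Set G) ∧ t • z ∈ V := by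
  intro K hK
  obtain ⟨y, hyV, hy_closure, hy_orbit⟩ := hne
  have hKz : IsClosed ((· • z) '' K) := (hK.image (continuous_id.smul continuous_const)).isClosed
  have hy : y ∉ (· • z) '' K := fun ⟨k, _, hk⟩ => hy_orbit ⟨k, hk⟩
  obtain ⟨_, ⟨t, rfl⟩, htV, htK⟩ :=
    (closure_inter_open_nonempty_iff (hV.sdiff hKz)).mp ⟨y, hy_closure, hyV, hy⟩
  exact ⟨t, fun ht => htK (smul_mem_image_smul_of_mem_mul_stabilizer ht), htV⟩

/-- If an open set `V` meets `cl(G·z) \ G·z`, then for every compact `K ⊆ G`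
there exists `t ∈ G \ K S_z` with `t • z ∈ V`. -/
theorem stmt9 {G X : Type*} [Group G] [TopologicalSpace G] [IsTopologicalGroup G]
    [LocallyCompactSpace G] [T2Space G]
    [TopologicalSpace X] [T2Space X] [LocallyCompactSpace X]
    [MulAction G X] [ContinuousSMul G X]
    (z : X) (V : Set X) (hV : IsOpen V)
    (hne : (V ∩ (closure (MulAction.orbit G z) \ MulAction.orbit G z)).Nonempty) :
    ∀ K : Set G, IsCompact K →
      ∃ t : G, t ∉ K * (MulAction.stabilizer G z : Set G) ∧ t • z ∈ V :=
  stmt9_general z V hV hne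
end
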